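/- For ω = 2, γ = 1, ε = 2√3, the characteristic polynomial of A(ω,ε,γ) equals (λ² + 2)², so the eigenvalues are i√2 and -i√2, each with algebraic multiplicity 2; moreover at these parameter values A is not diagonalizable over ℂ (each eigenvalue has geometric multiplicity 1). -/

import Mathlib

/-!
Expanding the determinant gives `charpoly A(ω,ε,γ) = (λ² + ω²)² - 4γ²λ² - ε²`, which at
`ω = 2`, `γ = 1`, `ε² = 12` collapses to `(λ² + 2)²`. A diagonalizable matrix is annihilated by
every polynomial vanishing on its spectrum, so diagonalizability would force `A² + 2 = 0`;
but the `(0, 2)` entry of `A² + 2` is `-2γ = -2`.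
-/

open Matrix Polynomial

/-- The coefficient matrix `A(ω,ε,γ)` of the coupled-oscillator system of Eq. (27)–(28),
viewed as a complex matrix with real entries. -/
noncomputable def Am (om ep ga : ℝ) : Matrix (Fin 4) (Fin 4) ℂ :=
  !![0, 0, 1, 0;
     0, 0, 0, 1;
     -((om : ℂ) ^ 2), -(ep : ℂ), -2 * (ga : ℂ), 0;
     -(ep : ℂ), -((om : ℂ) ^ 2), 0, 2 * (ga : ℂ)]

theorem Polynomial.aeval_units_conj {R A : Type*} [CommSemiring R] [Ring A] [Algebra R A]
    (u : Aˣ) (x : A) (p : R[X]) : aeval (u * x * ↑u⁻¹ : A) p = u * aeval x p * ↑u⁻¹ := by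
  simpa [ConjAct.units_smul_def] using
    congrArg (· p) (aeval_algEquiv (MulSemiringAction.toAlgEquiv R A (ConjAct.toConjAct u)) x)

theorem Matrix.aeval_diagonal {R n : Type*} [CommSemiring R] [Fintype n] [DecidableEq n]
    (d : n → R) (p : R[X]) : aeval (diagonal d) p = diagonal fun i => p.eval (d i) := by
  simpa [aeval_pi_apply] using aeval_algHom_apply (diagonalAlgHom R : (n → R) →ₐ[R] _) d p

theorem Matrix.aeval_eq_zero_of_conj_diagonal {K n : Type*} [Field K] [Fintype n] [DecidableEq n]
    {A Q : Matrix n n K} (hQ : IsUnit Q) {d : n → K} (hd : Q⁻¹ * A * Q = diagonal d) {p : K[X]}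
    (hp : ∀ μ ∈ spectrum K A, p.IsRoot μ) : aeval A p = 0 := by
  obtain ⟨u, rfl⟩ := hQ
  have hA : A = u * diagonal d * (↑u⁻¹ : Matrix n n K) := by
    rw [← hd, Matrix.coe_units_inv]
    simp [← Matrix.mul_assoc]
  have hroot : ∀ i, p.eval (d i) = 0 := fun i =>
    hp _ (by rw [hA, spectrum.units_conjugate, spectrum_diagonal]; exact ⟨i, rfl⟩)
  rw [hA, aeval_units_conj, aeval_diagonal]
  simp [hroot]

theorem Am_charpoly (om ep ga : ℝ) :
    (Am om ep ga).charpoly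
      = (X ^ 2 + C (om : ℂ) ^ 2) ^ 2 - 4 * C (ga : ℂ) ^ 2 * X ^ 2 - C (ep : ℂ) ^ 2 := by
  rw [Matrix.charpoly, Matrix.det_succ_row_zero]
  simp [Fin.sum_univ_succ, Matrix.det_succ_row_zero, Fin.succAbove, Am, charmatrix_apply,
    Matrix.diagonal_apply, C_ofNat]
  ring

theorem Am_sq_apply_zero_two (om ep ga : ℝ) : (Am om ep ga ^ 2) 0 2 = -2 * ga := by
  simp [sq, Am, Matrix.mul_apply, Fin.sum_univ_succ]

theorem Am_EP_charpoly : (Am 2 (2 * Real.sqrt 3) 1).charpoly = (X ^ 2 + C 2) ^ 2 := by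
  have h3 : C ((2 * Real.sqrt 3 : ℝ) : ℂ) ^ 2 = (12 : ℂ[X]) := by
    rw [← map_pow, ← Complex.ofReal_pow, mul_pow, Real.sq_sqrt zero_le_three]
    norm_num [C_ofNat]
  rw [Am_charpoly, h3]
  simp only [Complex.ofReal_ofNat, Complex.ofReal_one, map_ofNat, map_one]
  ring

theorem I_mul_sqrt_two_sq : (Complex.I * Real.sqrt 2) ^ 2 = -2 := by
  rw [mul_pow, Complex.I_sq, ← Complex.ofReal_pow, Real.sq_sqrt zero_le_two]
  norm_num

theorem Am_EP_mem_spectrum_iff (μ : ℂ) :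
    μ ∈ spectrum ℂ (Am 2 (2 * Real.sqrt 3) 1) ↔ μ ^ 2 + 2 = 0 := by
  simp [mem_spectrum_iff_isRoot_charpoly, Am_EP_charpoly]

/-- At `ω = 2`, `γ = 1`, `ε = 2√3`, the characteristic polynomial of `A(ω,ε,γ)` equals
`(λ² + 2)²`, so the eigenvalues are `±i√2`, each with algebraic multiplicity 2; moreover
`A` is not diagonalizable over `ℂ` at these parameter values. -/
theorem Am_EP :
    (Am 2 (2 * Real.sqrt 3) 1).charpoly = (X ^ 2 + C 2) ^ 2 ∧
    spectrum ℂ (Am 2 (2 * Real.sqrt 3) 1)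
      = {Complex.I * (Real.sqrt 2 : ℂ), -(Complex.I * (Real.sqrt 2 : ℂ))} ∧
    ¬∃ Q : Matrix (Fin 4) (Fin 4) ℂ, IsUnit Q ∧
      ∃ d : Fin 4 → ℂ, Q⁻¹ * Am 2 (2 * Real.sqrt 3) 1 * Q = Matrix.diagonal d := by
  refine ⟨Am_EP_charpoly, ?_, ?_⟩
  · ext μ
    rw [Am_EP_mem_spectrum_iff, ← sub_neg_eq_add, ← I_mul_sqrt_two_sq, sub_eq_zero,
      sq_eq_sq_iff_eq_or_eq_neg]
    rfl
  · rintro ⟨Q, hQ, d, hd⟩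
    have h := aeval_eq_zero_of_conj_diagonal hQ hd (p := X ^ 2 + C 2)
      fun μ hμ => by simpa using (Am_EP_mem_spectrum_iff μ).mp hμ
    have h02 := congrFun (congrFun h 0) 2
    simp [Am_sq_apply_zero_two, algebraMap_matrix_apply] at h02
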